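/- arXiv:1406.6592 — 3 statements merged into one kernel-verified Lean document; each statement's English description precedes it below -/
import Mathlib

section
/- Let B and O be nonempty finite types, let m, M > 0, let C and Ĉ be symmetric real matrices indexed by O with m·I ⪯ C and m·I ⪯ Ĉ (so both are positive definite, hence invertible), and let D and D̂ be real B × O matrices with ‖D‖ ≤ M. Then ‖D̂ Ĉ⁻¹ − D C⁻¹‖ ≤ (1/m)·‖D̂ − D‖ + (M/m²)·‖Ĉ − C‖. -/
/-!
Write `Dhat Chat⁻¹ - D C⁻¹ = (Dhat - D) Chat⁻¹ + D C⁻¹ (C - Chat) Chat⁻¹`. The lower bound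
`m • 1 ⪯ C` gives `m ‖x‖ ≤ ⟪C x, x⟫ ≤ ‖C x‖ ‖x‖`, hence `‖C⁻¹‖ ≤ 1 / m`, and likewise for `Chat`;
submultiplicativity of the operator norm bounds the two terms.
-/

open Matrix

/-- The ℓ²→ℓ² operator norm of a real matrix (the norm induced by the Euclidean
norms on the domain and codomain). -/
noncomputable def l2OpNorm {α β : Type*} [Fintype α] [Fintype β] [DecidableEq β]
    (M : Matrix α β ℝ) : ℝ :=
  ‖LinearMap.toContinuousLinearMap (Matrix.toEuclideanLin M)‖

open scoped Matrix.Norms.L2Operator InnerProductSpace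

theorem LinearMap.IsPositive.mul_norm_le_norm_apply {E : Type*} [NormedAddCommGroup E]
    [InnerProductSpace ℝ E] {T : E →ₗ[ℝ] E} {m : ℝ} (hT : (T - m • LinearMap.id).IsPositive)
    (x : E) : m * ‖x‖ ≤ ‖T x‖ := by
  rcases (norm_nonneg x).eq_or_lt with hx | hx
  · simp [← hx]
  have hquad : m * ‖x‖ ^ 2 ≤ ⟪T x, x⟫_ℝ := by
    have := hT.2 x
    simp only [LinearMap.sub_apply, LinearMap.smul_apply, LinearMap.id_apply, inner_sub_left,
      real_inner_smul_left, real_inner_self_eq_norm_sq, RCLike.re_to_real] at this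
    linarith
  have hcs : ⟪T x, x⟫_ℝ ≤ ‖T x‖ * ‖x‖ := real_inner_le_norm _ _
  nlinarith

namespace Matrix

theorem posDef_of_posSemidef_sub_smul_one {n : Type*} [DecidableEq n] {m : ℝ} (hm : 0 < m)
    {C : Matrix n n ℝ} (hC : (C - m • 1).PosSemidef) : C.PosDef :=
  sub_add_cancel C (m • 1) ▸ PosDef.posSemidef_add hC (PosDef.one.smul hm)

variable {n : Type*} [Fintype n] [DecidableEq n]

theorem l2_opNorm_inv_le_of_posSemidef_sub_smul_one {m : ℝ} (hm : 0 < m) {C : Matrix n n ℝ}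
    (hC : (C - m • 1).PosSemidef) : ‖C⁻¹‖ ≤ m⁻¹ := by
  have hCunit : IsUnit C.det :=
    (isUnit_iff_isUnit_det C).1 (posDef_of_posSemidef_sub_smul_one hm hC).isUnit
  have hpos : (C.toEuclideanLin - m • LinearMap.id).IsPositive := by
    simpa [map_sub, map_smul] using isPositive_toEuclideanLin_iff.2 hC
  rw [l2_opNorm_def]
  refine ContinuousLinearMap.opNorm_le_bound _ (by positivity) fun y => ?_
  have hCy : C.toEuclideanLin (C⁻¹.toEuclideanLin y) = y := by
    simp [toLpLin_apply, mulVec_mulVec, mul_nonsing_inv C hCunit]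
  have hlow := hpos.mul_norm_le_norm_apply (C⁻¹.toEuclideanLin y)
  rw [hCy] at hlow
  rw [le_inv_mul_iff₀ hm]
  simpa using hlow

theorem mul_inv_sub_mul_inv {k R : Type*} [CommRing R] {A Ahat : Matrix n n R}
    (hA : IsUnit A.det) (hAhat : IsUnit Ahat.det) (D Dhat : Matrix k n R) :
    Dhat * Ahat⁻¹ - D * A⁻¹ = (Dhat - D) * Ahat⁻¹ + D * A⁻¹ * (A - Ahat) * Ahat⁻¹ := by
  have hA' : D * A⁻¹ * A * Ahat⁻¹ = D * Ahat⁻¹ := by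
    rw [Matrix.mul_assoc D, nonsing_inv_mul _ hA, Matrix.mul_one]
  have hAhat' : D * A⁻¹ * Ahat * Ahat⁻¹ = D * A⁻¹ := by
    rw [Matrix.mul_assoc, mul_nonsing_inv _ hAhat, Matrix.mul_one]
  rw [Matrix.mul_sub, Matrix.sub_mul (D * A⁻¹ * A), hA', hAhat', Matrix.sub_mul]
  abel

end Matrix

theorem stmt0_general {B O : Type*} [Fintype B] [Fintype O] [DecidableEq O]
    (m M : ℝ) (hm : 0 < m)
    (C Chat : Matrix O O ℝ)
    (hC : (C - m • (1 : Matrix O O ℝ)).PosSemidef)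
    (hChat : (Chat - m • (1 : Matrix O O ℝ)).PosSemidef)
    (D Dhat : Matrix B O ℝ) (hD : l2OpNorm D ≤ M) :
    l2OpNorm (Dhat * Chat⁻¹ - D * C⁻¹) ≤
      (1 / m) * l2OpNorm (Dhat - D) + (M / m ^ 2) * l2OpNorm (Chat - C) := by
  change ‖D‖ ≤ M at hD
  change ‖Dhat * Chat⁻¹ - D * C⁻¹‖ ≤ (1 / m) * ‖Dhat - D‖ + (M / m ^ 2) * ‖Chat - C‖
  have hCinv := l2_opNorm_inv_le_of_posSemidef_sub_smul_one hm hC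
  have hChatinv := l2_opNorm_inv_le_of_posSemidef_sub_smul_one hm hChat
  have unit_det {A : Matrix O O ℝ} (hA : (A - m • 1).PosSemidef) : IsUnit A.det :=
    (isUnit_iff_isUnit_det A).1 (posDef_of_posSemidef_sub_smul_one hm hA).isUnit
  rw [mul_inv_sub_mul_inv (unit_det hC) (unit_det hChat), ← norm_sub_rev C]
  calc ‖(Dhat - D) * Chat⁻¹ + D * C⁻¹ * (C - Chat) * Chat⁻¹‖
      ≤ ‖Dhat - D‖ * ‖Chat⁻¹‖ + ‖D‖ * ‖C⁻¹‖ * ‖C - Chat‖ * ‖Chat⁻¹‖ := by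
        refine (norm_add_le _ _).trans (add_le_add (l2_opNorm_mul _ _) ?_)
        calc ‖D * C⁻¹ * (C - Chat) * Chat⁻¹‖
            ≤ ‖D * C⁻¹ * (C - Chat)‖ * ‖Chat⁻¹‖ := l2_opNorm_mul _ _
          _ ≤ ‖D * C⁻¹‖ * ‖C - Chat‖ * ‖Chat⁻¹‖ := by gcongr; exact l2_opNorm_mul _ _
          _ ≤ ‖D‖ * ‖C⁻¹‖ * ‖C - Chat‖ * ‖Chat⁻¹‖ := by gcongr; exact l2_opNorm_mul _ _
    _ ≤ ‖Dhat - D‖ * m⁻¹ + M * m⁻¹ * ‖C - Chat‖ * m⁻¹ := by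
        have := (norm_nonneg D).trans hD
        gcongr
    _ = (1 / m) * ‖Dhat - D‖ + (M / m ^ 2) * ‖C - Chat‖ := by ring

theorem stmt0 {B O : Type*} [Fintype B] [Fintype O] [Nonempty B] [Nonempty O] [DecidableEq O]
    (m M : ℝ) (hm : 0 < m) (hM : 0 < M)
    (C Chat : Matrix O O ℝ) (hCsymm : C.IsSymm) (hChatsymm : Chat.IsSymm)
    (hC : (C - m • (1 : Matrix O O ℝ)).PosSemidef)
    (hChat : (Chat - m • (1 : Matrix O O ℝ)).PosSemidef)
    (D Dhat : Matrix B O ℝ) (hD : l2OpNorm D ≤ M) :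
    l2OpNorm (Dhat * Chat⁻¹ - D * C⁻¹) ≤
      (1 / m) * l2OpNorm (Dhat - D) + (M / m ^ 2) * l2OpNorm (Chat - C) :=
  stmt0_general m M hm C Chat hC hChat D Dhat hD
end

section
/- Let B and O be nonempty finite types, O_p ⊆ O a subset (with e : O_p → O the inclusion), let 0 < m ≤ M, and let K be a symmetric real matrix indexed by B ⊕ O with m·I ⪯ K ⪯ M·I. Let Δ be the real B × O matrix whose column indexed by o ∈ O equals the o-column of K_{BO_p}(K_{O_p})⁻¹ when o ∈ O_p and is zero when o ∈ O ∖ O_p, minus the o-column of K_{BO}(K_O)⁻¹. Then ‖Δ‖ ≤ (M²/m + M) · ‖(K⁻¹)_{B, O∖O_p}‖, where (K⁻¹)_{B, O∖O_p} is the submatrix of K⁻¹ with rows in B and columns in O ∖ O_p. -/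
open Matrix

open scoped Matrix.Norms.L2Operator

/-!
Write `Q = K_{BO} K_O⁻¹` and `R = O ∖ O_p`. Restricting `Q K_O = K_{BO}` to the columns `O_p`
gives `K_{BO_p} = Q_{O_p} K_{O_p} + Q_R K_{RO_p}`, so `Δ` equals `Q_R K_{RO_p} K_{O_p}⁻¹` on the
columns `O_p` and `-Q_R` on the columns `R`. The `(B, O)` block of `K⁻¹ K = 1` gives
`Q = -((K⁻¹)_B)⁻¹ (K⁻¹)_{BO}`, and `K ⪯ M I` gives `(K⁻¹)_B ⪰ M⁻¹ I`, so
`‖Q_R‖ ≤ M ‖(K⁻¹)_{BR}‖`. Finally `‖K_{RO_p}‖ ≤ ‖K‖ ≤ M` and `‖K_{O_p}⁻¹‖ ≤ m⁻¹`.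
-/

namespace Matrix

lemma mul_eq_submatrix_mul_add_compl {α : Type*} [NonUnitalNonAssocSemiring α] {l m n : Type*}
    [Fintype m] [DecidableEq m]
    (A : Matrix l m α) (B : Matrix m n α) (s : Finset m) :
    A * B = A.submatrix id ((↑) : s → m) * B.submatrix ((↑) : s → m) id
      + A.submatrix id ((↑) : ↥sᶜ → m) * B.submatrix ((↑) : ↥sᶜ → m) id := by
  ext i j
  simp only [add_apply, mul_apply, submatrix_apply, id_eq]
  rw [Finset.sum_coe_sort s (fun k => A i k * B k j),
    Finset.sum_coe_sort sᶜ (fun k => A i k * B k j), Finset.sum_add_sum_compl]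

section Norm
variable {𝕜 : Type*} [RCLike 𝕜] {l m n : Type*} [Fintype l] [Fintype m] [Fintype n]

lemma l2_opNorm_one_le [DecidableEq n] : ‖(1 : Matrix n n 𝕜)‖ ≤ 1 := by
  rw [cstar_norm_def, map_one]
  exact ContinuousLinearMap.norm_id_le

lemma l2_opNorm_one_submatrix_le [DecidableEq m] [DecidableEq n] {f : m → n}
    (hf : Function.Injective f) : ‖(1 : Matrix n n 𝕜).submatrix f id‖ ≤ 1 := by
  have hPP : ((1 : Matrix n n 𝕜).submatrix f id)ᴴᴴ * ((1 : Matrix n n 𝕜).submatrix f id)ᴴ = 1 := by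
    rw [conjTranspose_conjTranspose, conjTranspose_submatrix, conjTranspose_one,
      ← submatrix_mul _ _ _ _ _ Function.bijective_id, one_mul, submatrix_one f hf]
  have h := l2_opNorm_conjTranspose_mul_self ((1 : Matrix n n 𝕜).submatrix f id)ᴴ
  rw [hPP, l2_opNorm_conjTranspose] at h
  nlinarith [l2_opNorm_one_le (𝕜 := 𝕜) (n := m), norm_nonneg ((1 : Matrix n n 𝕜).submatrix f id)]

lemma l2_opNorm_submatrix_le [DecidableEq l] [DecidableEq m] [DecidableEq n] {l' : Type*}
    [Fintype l'] [DecidableEq l'] (A : Matrix m n 𝕜) {f : l → m} {g : l' → n}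
    (hf : Function.Injective f) (hg : Function.Injective g) :
    ‖A.submatrix f g‖ ≤ ‖A‖ := by
  have hA : A.submatrix f g
      = (1 : Matrix m m 𝕜).submatrix f id * A * ((1 : Matrix n n 𝕜).submatrix g id)ᴴ := by
    rw [conjTranspose_submatrix, conjTranspose_one]
    ext i j
    simp [mul_apply, one_apply]
  rw [hA]
  grw [l2_opNorm_mul, l2_opNorm_mul, l2_opNorm_conjTranspose, l2_opNorm_one_submatrix_le hf,
    l2_opNorm_one_submatrix_le hg, one_mul, mul_one]

lemma l2_opNorm_le_add_compl [DecidableEq n] (A : Matrix m n 𝕜) (s : Finset n) :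
    ‖A‖ ≤ ‖A.submatrix id ((↑) : s → n)‖ + ‖A.submatrix id ((↑) : ↥sᶜ → n)‖ := by
  conv_lhs => rw [← Matrix.mul_one A, mul_eq_submatrix_mul_add_compl A 1 s]
  grw [norm_add_le, l2_opNorm_mul, l2_opNorm_mul, l2_opNorm_one_submatrix_le Subtype.val_injective,
    l2_opNorm_one_submatrix_le Subtype.val_injective, mul_one, mul_one]

end Norm

section Order
variable {n : Type*} [DecidableEq n]

lemma posDef_of_posSemidef_sub_smul_one_s3 {X : Matrix n n ℝ} {c : ℝ} (hc : 0 < c)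
    (h : (X - c • 1).PosSemidef) : X.PosDef := by
  simpa using PosDef.posSemidef_add h (PosDef.one.smul hc)

lemma PosSemidef.submatrix_sub_smul_one {m : Type*} [DecidableEq m] {X : Matrix n n ℝ} {c : ℝ}
    (h : (X - c • 1).PosSemidef) {f : m → n} (hf : Function.Injective f) :
    (X.submatrix f f - c • 1).PosSemidef := by
  simpa [submatrix_sub, submatrix_smul, submatrix_one f hf] using h.submatrix f

variable [Fintype n]

lemma l2_opNorm_le_of_posSemidef_smul_sub_mul_self {Y : Matrix n n ℝ} (hY : Y.IsHermitian)
    {c : ℝ} (hc : 0 ≤ c) (h : (c • Y - Y * Y).PosSemidef) : ‖Y‖ ≤ c := by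
  rw [← l2_opNorm_toEuclideanCLM]
  refine ContinuousLinearMap.opNorm_le_bound _ hc fun x => ?_
  set y := toEuclideanCLM (𝕜 := ℝ) Y x
  have hsq : ‖y‖ ^ 2 ≤ c * inner ℝ x y := by
    have h0 := h.dotProduct_mulVec_nonneg (WithLp.ofLp x)
    have hYt : Yᵀ = Y := by simpa using hY.eq
    rw [← real_inner_self_eq_norm_sq, inner_toEuclideanCLM, inner_toEuclideanCLM]
    simp only [star_trivial, sub_mulVec, smul_mulVec, dotProduct_sub, dotProduct_smul, smul_eq_mul,
      ← mulVec_mulVec, sub_nonneg] at h0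
    simpa [y, dotProduct_mulVec, ← mulVec_transpose, hYt] using h0
  have hcs : c * inner ℝ x y ≤ c * (‖x‖ * ‖y‖) :=
    mul_le_mul_of_nonneg_left (real_inner_le_norm x y) hc
  nlinarith [mul_nonneg hc (norm_nonneg x)]

lemma PosSemidef.posSemidef_smul_sub_mul_self {X : Matrix n n ℝ} (hX : X.PosSemidef) {c : ℝ}
    (h : (c • 1 - X).PosSemidef) : (c • X - X * X).PosSemidef := by
  open scoped MatrixOrder in
  obtain ⟨s, hs, rfl⟩ : ∃ s : Matrix n n ℝ, sᴴ = s ∧ s * s = X :=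
    ⟨CFC.sqrt X, (CFC.sqrt_nonneg X).posSemidef.isHermitian.eq, CFC.sqrt_mul_sqrt_self X hX.nonneg⟩
  -- conjugate `c • 1 - s * s` by the square root `s` of `X`
  have := h.conjTranspose_mul_mul_same s
  rw [hs] at this
  convert this using 1
  simp only [Matrix.mul_sub, Matrix.sub_mul, Matrix.mul_smul, Matrix.smul_mul, Matrix.mul_one,
    Matrix.mul_assoc]

lemma l2_opNorm_le_of_posSemidef {X : Matrix n n ℝ} (hX : X.PosSemidef) {c : ℝ} (hc : 0 ≤ c)
    (h : (c • 1 - X).PosSemidef) : ‖X‖ ≤ c :=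
  l2_opNorm_le_of_posSemidef_smul_sub_mul_self hX.isHermitian hc
    (hX.posSemidef_smul_sub_mul_self h)

lemma PosDef.posSemidef_inv_sub_smul_one {X : Matrix n n ℝ} (hX : X.PosDef) {c : ℝ} (hc : 0 < c)
    (h : (c • 1 - X).PosSemidef) : (X⁻¹ - c⁻¹ • 1).PosSemidef := by
  have hdet : IsUnit X.det := (isUnit_iff_isUnit_det X).mp hX.isUnit
  have := ((hX.posSemidef.posSemidef_smul_sub_mul_self h).conjTranspose_mul_mul_same X⁻¹).smul
    (inv_nonneg.mpr hc.le)
  rw [hX.isHermitian.inv.eq] at this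
  convert this using 1
  have hXX : X⁻¹ * (X * X) * X⁻¹ = 1 := by
    rw [← Matrix.mul_assoc, nonsing_inv_mul _ hdet, Matrix.one_mul, mul_nonsing_inv _ hdet]
  rw [Matrix.mul_sub, Matrix.sub_mul, Matrix.mul_smul, Matrix.smul_mul, nonsing_inv_mul _ hdet,
    Matrix.one_mul, hXX, smul_sub, smul_smul, inv_mul_cancel₀ hc.ne', one_smul]

lemma l2_opNorm_inv_le {X : Matrix n n ℝ} {c : ℝ} (hc : 0 < c)
    (h : (X - c • 1).PosSemidef) : ‖X⁻¹‖ ≤ c⁻¹ := by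
  have hX := posDef_of_posSemidef_sub_smul_one_s3 hc h
  have hdet : IsUnit X.det := (isUnit_iff_isUnit_det X).mp hX.isUnit
  refine l2_opNorm_le_of_posSemidef_smul_sub_mul_self hX.isHermitian.inv (inv_nonneg.mpr hc.le) ?_
  have := (h.conjTranspose_mul_mul_same X⁻¹).smul (inv_nonneg.mpr hc.le)
  rw [hX.isHermitian.inv.eq] at this
  convert this using 1
  rw [Matrix.mul_sub, Matrix.sub_mul, Matrix.mul_smul, Matrix.smul_mul, nonsing_inv_mul _ hdet,
    Matrix.one_mul, Matrix.mul_one, smul_sub, smul_smul, inv_mul_cancel₀ hc.ne', one_smul]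

end Order

section Regression
variable {F : Type*} [Field F] {m n : Type*} [Fintype m] [Fintype n] [DecidableEq m] [DecidableEq n]

lemma toBlocks₁₂_mul_inv_toBlocks₂₂ (A : Matrix (m ⊕ n) (m ⊕ n) F) (hA : IsUnit A.det)
    (h₁₁ : IsUnit (A⁻¹).toBlocks₁₁.det) (h₂₂ : IsUnit A.toBlocks₂₂.det) :
    A.toBlocks₁₂ * A.toBlocks₂₂⁻¹ = -((A⁻¹).toBlocks₁₁⁻¹ * (A⁻¹).toBlocks₁₂) := by
  have hblock : (A⁻¹).toBlocks₁₁ * A.toBlocks₁₂ + (A⁻¹).toBlocks₁₂ * A.toBlocks₂₂ = 0 := by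
    have := congrArg toBlocks₁₂ (nonsing_inv_mul A hA)
    set S := A⁻¹
    rwa [← fromBlocks_toBlocks S, ← fromBlocks_toBlocks A, fromBlocks_multiply,
      toBlocks_fromBlocks₁₂, ← fromBlocks_one, toBlocks_fromBlocks₁₂] at this
  calc A.toBlocks₁₂ * A.toBlocks₂₂⁻¹
      = (A⁻¹).toBlocks₁₁⁻¹ * ((A⁻¹).toBlocks₁₁ * A.toBlocks₁₂) * A.toBlocks₂₂⁻¹ := by
        rw [nonsing_inv_mul_cancel_left _ _ h₁₁]
    _ = (A⁻¹).toBlocks₁₁⁻¹ * -((A⁻¹).toBlocks₁₂ * A.toBlocks₂₂) * A.toBlocks₂₂⁻¹ := by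
        rw [eq_neg_of_add_eq_zero_left hblock]
    _ = -((A⁻¹).toBlocks₁₁⁻¹ * (A⁻¹).toBlocks₁₂) := by
        rw [Matrix.mul_neg, Matrix.neg_mul, ← Matrix.mul_assoc,
          mul_nonsing_inv_cancel_right _ _ h₂₂]

lemma mul_submatrix_mul_inv_sub_submatrix {l : Type*} (Q : Matrix l n F) (C : Matrix n n F)
    (s : Finset n) (hC : IsUnit (C.submatrix ((↑) : s → n) ((↑) : s → n)).det) :
    (Q * C).submatrix id ((↑) : s → n) * (C.submatrix ((↑) : s → n) ((↑) : s → n))⁻¹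
      - Q.submatrix id ((↑) : s → n)
      = Q.submatrix id ((↑) : ↥sᶜ → n) * C.submatrix ((↑) : ↥sᶜ → n) ((↑) : s → n)
        * (C.submatrix ((↑) : s → n) ((↑) : s → n))⁻¹ := by
  have hsplit : (Q * C).submatrix id ((↑) : s → n) = Q * C.submatrix id ((↑) : s → n) := rfl
  rw [hsplit, mul_eq_submatrix_mul_add_compl Q _ s]
  simp only [submatrix_submatrix, Function.id_comp, Function.comp_id]
  rw [Matrix.add_mul, mul_nonsing_inv_cancel_right _ _ hC, add_sub_cancel_left]

end Regression

section Bias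
variable {α β : Type*} [Fintype α] [Fintype β] [DecidableEq α] [DecidableEq β]
  {K : Matrix (α ⊕ β) (α ⊕ β) ℝ} {m M : ℝ}

lemma l2_opNorm_regression_submatrix_le (hK : K.PosDef) (hM : 0 < M)
    (hKhi : (M • 1 - K).PosSemidef) {γ : Type*} [Fintype γ] [DecidableEq γ] (g : γ → β) :
    ‖(K.toBlocks₁₂ * K.toBlocks₂₂⁻¹).submatrix id g‖ ≤ M * ‖(K⁻¹).toBlocks₁₂.submatrix id g‖ := by
  have hS₁₁inv : ‖(K⁻¹).toBlocks₁₁⁻¹‖ ≤ M := by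
    have h := l2_opNorm_inv_le (inv_pos.mpr hM)
      ((hK.posSemidef_inv_sub_smul_one hM hKhi).submatrix_sub_smul_one Sum.inl_injective)
    rwa [inv_inv] at h
  rw [toBlocks₁₂_mul_inv_toBlocks₂₂ K ((isUnit_iff_isUnit_det K).mp hK.isUnit)
    ((isUnit_iff_isUnit_det _).mp (hK.inv.submatrix Sum.inl_injective).isUnit)
    ((isUnit_iff_isUnit_det _).mp (hK.submatrix Sum.inr_injective).isUnit)]
  show ‖-((K⁻¹).toBlocks₁₁⁻¹ * (K⁻¹).toBlocks₁₂.submatrix id g)‖ ≤ _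
  rw [norm_neg]
  exact (l2_opNorm_mul _ _).trans (mul_le_mul_of_nonneg_right hS₁₁inv (norm_nonneg _))

lemma l2_opNorm_regression_sub_le (hm : 0 < m) (hM : 0 ≤ M) (hKlo : (K - m • 1).PosSemidef)
    (hKhi : (M • 1 - K).PosSemidef) (s : Finset β) :
    ‖K.toBlocks₁₂.submatrix id ((↑) : s → β)
          * (K.toBlocks₂₂.submatrix ((↑) : s → β) ((↑) : s → β))⁻¹
        - (K.toBlocks₁₂ * K.toBlocks₂₂⁻¹).submatrix id ((↑) : s → β)‖
      ≤ M * m⁻¹ * ‖(K.toBlocks₁₂ * K.toBlocks₂₂⁻¹).submatrix id ((↑) : ↥sᶜ → β)‖ := by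
  have hK := posDef_of_posSemidef_sub_smul_one_s3 hm hKlo
  have hιs : Function.Injective (fun j : s => (Sum.inr (j : β) : α ⊕ β)) :=
    Sum.inr_injective.comp Subtype.val_injective
  have hιsc : Function.Injective (fun j : ↥sᶜ => (Sum.inr (j : β) : α ⊕ β)) :=
    Sum.inr_injective.comp Subtype.val_injective
  have hKs : (K.toBlocks₂₂.submatrix ((↑) : s → β) ((↑) : s → β) - m • 1).PosSemidef :=
    hKlo.submatrix_sub_smul_one hιs
  have hKsc : ‖K.toBlocks₂₂.submatrix ((↑) : ↥sᶜ → β) ((↑) : s → β)‖ ≤ M :=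
    (l2_opNorm_submatrix_le K hιsc hιs).trans (l2_opNorm_le_of_posSemidef hK.posSemidef hM hKhi)
  have hQK : K.toBlocks₁₂ * K.toBlocks₂₂⁻¹ * K.toBlocks₂₂ = K.toBlocks₁₂ :=
    nonsing_inv_mul_cancel_right _ _
      ((isUnit_iff_isUnit_det _).mp (hK.submatrix Sum.inr_injective).isUnit)
  have hsplit := mul_submatrix_mul_inv_sub_submatrix (K.toBlocks₁₂ * K.toBlocks₂₂⁻¹) K.toBlocks₂₂ s
    ((isUnit_iff_isUnit_det _).mp (posDef_of_posSemidef_sub_smul_one_s3 hm hKs).isUnit)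
  rw [hQK] at hsplit
  rw [hsplit]
  calc _ ≤ ‖(K.toBlocks₁₂ * K.toBlocks₂₂⁻¹).submatrix id ((↑) : ↥sᶜ → β)‖
          * ‖K.toBlocks₂₂.submatrix ((↑) : ↥sᶜ → β) ((↑) : s → β)‖
          * ‖(K.toBlocks₂₂.submatrix ((↑) : s → β) ((↑) : s → β))⁻¹‖ := by
        grw [l2_opNorm_mul, l2_opNorm_mul]
    _ ≤ ‖(K.toBlocks₁₂ * K.toBlocks₂₂⁻¹).submatrix id ((↑) : ↥sᶜ → β)‖ * M * m⁻¹ := by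
        gcongr
        exact l2_opNorm_inv_le hm hKs
    _ = _ := by ring

end Bias
end Matrix

theorem stmt3_general {B O : Type*} [Fintype B] [Fintype O]
    [DecidableEq B] [DecidableEq O]
    (Op : Finset O)
    (m M : ℝ) (hm : 0 < m) (hmM : m ≤ M)
    (K : Matrix (B ⊕ O) (B ⊕ O) ℝ)
    (hKlo : (K - m • (1 : Matrix (B ⊕ O) (B ⊕ O) ℝ)).PosSemidef)
    (hKhi : (M • (1 : Matrix (B ⊕ O) (B ⊕ O) ℝ) - K).PosSemidef)
    (Δ : Matrix B O ℝ)
    (hΔ : Δ = Matrix.of fun b o =>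
        (if h : o ∈ Op then
          (K.submatrix Sum.inl (fun j : Op => Sum.inr (j : O)) *
            (K.submatrix (fun i : Op => Sum.inr (i : O))
              (fun j : Op => Sum.inr (j : O)))⁻¹) b ⟨o, h⟩
        else 0)
        - (K.submatrix Sum.inl Sum.inr * (K.submatrix Sum.inr Sum.inr)⁻¹) b o) :
    l2OpNorm Δ ≤ (M ^ 2 / m + M) *
      l2OpNorm ((K⁻¹).submatrix Sum.inl (fun j : ↥Opᶜ => Sum.inr (j : O))) := by
  have hM : 0 < M := hm.trans_le hmM
  have hK : K.PosDef := posDef_of_posSemidef_sub_smul_one_s3 hm hKlo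
  set Q := K.toBlocks₁₂ * K.toBlocks₂₂⁻¹
  have hΔP : Δ.submatrix id ((↑) : Op → O)
      = K.toBlocks₁₂.submatrix id ((↑) : Op → O)
          * (K.toBlocks₂₂.submatrix ((↑) : Op → O) ((↑) : Op → O))⁻¹
        - Q.submatrix id ((↑) : Op → O) := by
    ext b j
    simp only [hΔ, submatrix_apply, of_apply, Matrix.sub_apply, id_eq, dif_pos j.2]
    rfl
  have hΔR : Δ.submatrix id ((↑) : ↥Opᶜ → O) = -Q.submatrix id ((↑) : ↥Opᶜ → O) := by
    ext b j
    simp only [hΔ, submatrix_apply, id_eq, of_apply, Finset.mem_compl.mp j.2, ↓reduceDIte,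
      zero_sub, Matrix.neg_apply, neg_inj]
    rfl
  -- `l2OpNorm` is the `Matrix.Norms.L2Operator` norm by definition
  show ‖Δ‖ ≤ (M ^ 2 / m + M) * ‖(K⁻¹).toBlocks₁₂.submatrix id ((↑) : ↥Opᶜ → O)‖
  calc ‖Δ‖ ≤ ‖Δ.submatrix id ((↑) : Op → O)‖ + ‖Δ.submatrix id ((↑) : ↥Opᶜ → O)‖ :=
        l2_opNorm_le_add_compl Δ Op
    _ ≤ M * m⁻¹ * ‖Q.submatrix id ((↑) : ↥Opᶜ → O)‖ + ‖Q.submatrix id ((↑) : ↥Opᶜ → O)‖ := by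
        rw [hΔP, hΔR, norm_neg]
        grw [l2_opNorm_regression_sub_le hm hM.le hKlo hKhi Op]
    _ = (M * m⁻¹ + 1) * ‖Q.submatrix id ((↑) : ↥Opᶜ → O)‖ := by ring
    _ ≤ (M * m⁻¹ + 1) * (M * ‖(K⁻¹).toBlocks₁₂.submatrix id ((↑) : ↥Opᶜ → O)‖) := by
        gcongr
        exact l2_opNorm_regression_submatrix_le hK hM hKhi _
    _ = _ := by ring

theorem stmt3 {B O : Type*} [Fintype B] [Fintype O] [Nonempty B] [Nonempty O]
    [DecidableEq B] [DecidableEq O]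
    (Op : Finset O)
    (m M : ℝ) (hm : 0 < m) (hmM : m ≤ M)
    (K : Matrix (B ⊕ O) (B ⊕ O) ℝ) (hKsymm : K.IsSymm)
    (hKlo : (K - m • (1 : Matrix (B ⊕ O) (B ⊕ O) ℝ)).PosSemidef)
    (hKhi : (M • (1 : Matrix (B ⊕ O) (B ⊕ O) ℝ) - K).PosSemidef)
    (Δ : Matrix B O ℝ)
    (hΔ : Δ = Matrix.of fun b o =>
        (if h : o ∈ Op then
          (K.submatrix Sum.inl (fun j : Op => Sum.inr (j : O)) *
            (K.submatrix (fun i : Op => Sum.inr (i : O))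
              (fun j : Op => Sum.inr (j : O)))⁻¹) b ⟨o, h⟩
        else 0)
        - (K.submatrix Sum.inl Sum.inr * (K.submatrix Sum.inr Sum.inr)⁻¹) b o) :
    l2OpNorm Δ ≤ (M ^ 2 / m + M) *
      l2OpNorm ((K⁻¹).submatrix Sum.inl (fun j : ↥Opᶜ => Sum.inr (j : O))) :=
  stmt3_general Op m M hm hmM K hKlo hKhi Δ hΔ
end

section
/- Let B and O be nonempty finite types, let 0 < m ≤ M, and let K be a symmetric real matrix indexed by B ⊕ O with m·I ⪯ K ⪯ M·I. Let (Ω, μ) be a probability space, X : Ω → (B ⊕ O → ℝ) a measurable map with ω ↦ (∑_{i ∈ O} X(ω)_i²)² integrable, and K̂ : Ω → (symmetric real matrices indexed by B ⊕ O) a measurable map such that for μ-almost every ω, m·I ⪯ K̂(ω) ⪯ M·I, and such that ∫ ‖K̂(ω) − K‖⁴ dμ(ω) ≤ r⁴ for some r ≥ 0. For a : B → ℝ with ‖a‖ = 1, set Z̄(ω) = aᵀ K_{BO}(K_O)⁻¹ X(ω)_O and Ẑ(ω) = aᵀ K̂(ω)_{BO}(K̂(ω)_O)⁻¹ X(ω)_O.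 Then (∫ (Ẑ − Z̄)² dμ)^{1/2} ≤ ((m + M)/m²) · ( ∫ (∑_{i ∈ O} X(ω)_i²)² dμ(ω) )^{1/4} · r. -/
open Matrix MeasureTheory

/-!
Write `ε = ‖K̂ - K‖`. Since `K_O` and `K̂_O` are invertible, the resolvent identity gives
`K̂_{BO} K̂_O⁻¹ - K_{BO} K_O⁻¹ = (K̂ - K)_{BO} K̂_O⁻¹ + K_{BO} K̂_O⁻¹ (K - K̂)_O K_O⁻¹`, and the
Loewner bounds give `‖K_O⁻¹‖, ‖K̂_O⁻¹‖ ≤ 1/m` and `‖K_{BO}‖ ≤ M`; so pointwise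
`(Ẑ - Z̄)² ≤ ((m + M)/m²)² ε² ‖X_O‖²`. Cauchy–Schwarz in `L²(μ)` then bounds `E[ε² ‖X_O‖²]` by
`E[ε⁴]^{1/2} E[‖X_O‖⁴]^{1/2}`.
-/

open scoped ENNReal Matrix.Norms.L2Operator MatrixOrder

namespace Matrix

variable {α β γ δ : Type*}

lemma measurable_norm_of_measurable_apply [Fintype α] [Fintype β] [DecidableEq β]
    {Ω : Type*} [MeasurableSpace Ω] {F : Ω → Matrix α β ℝ}
    (hF : ∀ i j, Measurable fun ω => F ω i j) :
    Measurable fun ω => ‖F ω‖ := by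
  have hcont : Continuous fun A : α → β → ℝ => ‖(Matrix.of A : Matrix α β ℝ)‖ :=
    continuous_norm.comp continuous_id
  exact hcont.measurable.comp (measurable_pi_lambda _ fun i => measurable_pi_lambda _ (hF i))

lemma sq_dotProduct_mulVec_le [Fintype α] [Fintype β] [DecidableEq β]
    (A : Matrix α β ℝ) (a : α → ℝ) (x : β → ℝ) :
    (a ⬝ᵥ (A *ᵥ x)) ^ 2 ≤ (∑ i, a i ^ 2) * (‖A‖ ^ 2 * ∑ j, x j ^ 2) := by
  have hAx : ∑ i, (A *ᵥ x) i ^ 2 ≤ ‖A‖ ^ 2 * ∑ j, x j ^ 2 := by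
    have h := A.l2_opNorm_mulVec (WithLp.toLp 2 x)
    rw [← sq_le_sq₀ (norm_nonneg _) (by positivity), mul_pow] at h
    simpa [EuclideanSpace.real_norm_sq_eq] using h
  calc (a ⬝ᵥ (A *ᵥ x)) ^ 2 ≤ (∑ i, a i ^ 2) * ∑ i, (A *ᵥ x) i ^ 2 :=
        Finset.sum_mul_sq_le_sq_mul_sq _ _ _
    _ ≤ (∑ i, a i ^ 2) * (‖A‖ ^ 2 * ∑ j, x j ^ 2) := by gcongr

lemma norm_submatrix_id_le [Fintype α] [Fintype β] [Fintype γ] [DecidableEq β]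
    (A : Matrix α β ℝ) {f : γ → α} (hf : Function.Injective f) :
    ‖A.submatrix f id‖ ≤ ‖A‖ := by
  refine ContinuousLinearMap.opNorm_le_bound _ (norm_nonneg A) fun x => ?_
  refine le_trans ?_ (A.l2_opNorm_mulVec x)
  refine (sq_le_sq₀ (norm_nonneg _) (norm_nonneg _)).mp ?_
  simp only [EuclideanSpace.real_norm_sq_eq]
  exact (Finset.sum_map _ ⟨f, hf⟩ fun i => (A *ᵥ x.ofLp) i ^ 2).symm.trans_le
    (Finset.sum_le_univ_sum_of_nonneg fun _ => sq_nonneg _)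

lemma norm_submatrix_le [Fintype α] [Fintype β] [Fintype γ] [Fintype δ] [DecidableEq β]
    [DecidableEq γ] [DecidableEq δ] (A : Matrix α β ℝ) {f : γ → α} {g : δ → β}
    (hf : Function.Injective f) (hg : Function.Injective g) :
    ‖A.submatrix f g‖ ≤ ‖A‖ := by
  have hcols : ‖(A.submatrix f id).submatrix id g‖ ≤ ‖A.submatrix f id‖ := by
    rw [← l2_opNorm_conjTranspose, conjTranspose_submatrix,
      ← l2_opNorm_conjTranspose (A.submatrix f id)]
    exact norm_submatrix_id_le _ hg
  exact hcols.trans (norm_submatrix_id_le A hf)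

lemma submatrix_smul_one_le [DecidableEq β] [DecidableEq γ] {A : Matrix β β ℝ} {m : ℝ}
    (hA : m • 1 ≤ A) {f : γ → β} (hf : Function.Injective f) :
    m • 1 ≤ A.submatrix f f := by
  rw [Matrix.le_iff] at hA ⊢
  simpa [submatrix_sub, submatrix_smul, submatrix_one f hf] using hA.submatrix f

lemma norm_le_of_le_smul_one [Fintype β] [DecidableEq β] {A : Matrix β β ℝ} {M : ℝ}
    (hM : 0 ≤ M) (hA0 : 0 ≤ A) (hAM : A ≤ M • 1) : ‖A‖ ≤ M := by
  rw [← Algebra.algebraMap_eq_smul_one, le_algebraMap_iff_spectrum_le] at hAM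
  rw [← cfc_id ℝ A]
  refine norm_cfc_le hM fun x hx => ?_
  rw [id, Real.norm_of_nonneg (spectrum_nonneg_of_nonneg hA0 hx)]
  exact hAM x hx

lemma isSelfAdjoint_of_smul_one_le [Fintype β] [DecidableEq β] {A : Matrix β β ℝ} {m : ℝ}
    (hA : m • 1 ≤ A) : IsSelfAdjoint A := by
  simpa using (IsSelfAdjoint.of_nonneg (sub_nonneg.mpr hA)).add
    (IsSelfAdjoint.smul (IsSelfAdjoint.all m) (IsSelfAdjoint.one (Matrix β β ℝ)))

lemma le_of_mem_spectrum_of_smul_one_le [Fintype β] [DecidableEq β] {A : Matrix β β ℝ}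
    {m : ℝ} (hA : m • 1 ≤ A) {x : ℝ} (hx : x ∈ spectrum ℝ A) : m ≤ x := by
  have := isSelfAdjoint_of_smul_one_le hA
  rw [← Algebra.algebraMap_eq_smul_one, algebraMap_le_iff_le_spectrum] at hA
  exact hA x hx

lemma isUnit_of_smul_one_le [Fintype β] [DecidableEq β] {A : Matrix β β ℝ} {m : ℝ}
    (hm : 0 < m) (hA : m • 1 ≤ A) : IsUnit A :=
  spectrum.zero_notMem_iff ℝ |>.mp fun h0 =>
    (hm.trans_le (le_of_mem_spectrum_of_smul_one_le hA h0)).false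

lemma norm_inv_le_of_smul_one_le [Fintype β] [DecidableEq β] {A : Matrix β β ℝ} {m : ℝ}
    (hm : 0 < m) (hA : m • 1 ≤ A) : ‖A⁻¹‖ ≤ m⁻¹ := by
  have hspec : ∀ x ∈ spectrum ℝ A, m ≤ x := fun x => le_of_mem_spectrum_of_smul_one_le hA
  have := isSelfAdjoint_of_smul_one_le hA
  rw [nonsing_inv_eq_ringInverse, ← cfc_id ℝ A,
    ← cfc_inv id A fun x hx => (hm.trans_le (hspec x hx)).ne']
  refine norm_cfc_le (inv_nonneg.mpr hm.le) fun x hx => ?_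
  rw [id, Real.norm_of_nonneg (inv_nonneg.mpr (hm.le.trans (hspec x hx)))]
  exact inv_anti₀ hm (hspec x hx)

lemma mul_inv_sub_mul_inv_s19 [Fintype β] [DecidableEq β] {A A' : Matrix β β ℝ}
    (B B' : Matrix α β ℝ) (h : IsUnit A' ↔ IsUnit A) :
    B' * A'⁻¹ - B * A⁻¹ = (B' - B) * A'⁻¹ + B * (A'⁻¹ * (A - A') * A⁻¹) := by
  rw [← inv_sub_inv h, Matrix.sub_mul, Matrix.mul_sub]
  abel

end Matrix

section Regression

variable {β ι : Type*} [Fintype β] [Fintype ι] [DecidableEq β] [DecidableEq ι]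

/-- `K_{BO} K_O⁻¹`: the coefficients of the best linear predictor of the `B`-coordinates from the
`O`-coordinates under the covariance `K`. -/
noncomputable def regressionCoeff (K : Matrix (β ⊕ ι) (β ⊕ ι) ℝ) : Matrix β ι ℝ :=
  K.submatrix Sum.inl Sum.inr * (K.submatrix Sum.inr Sum.inr)⁻¹

lemma norm_regressionCoeff_sub_le {m M : ℝ} (hm : 0 < m) (hM : 0 ≤ M)
    {K P : Matrix (β ⊕ ι) (β ⊕ ι) ℝ} (hKlo : m • 1 ≤ K) (hKhi : K ≤ M • 1) (hPlo : m • 1 ≤ P) :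
    ‖regressionCoeff P - regressionCoeff K‖ ≤ (m + M) / m ^ 2 * ‖P - K‖ := by
  have hKO := submatrix_smul_one_le hKlo Sum.inr_injective
  have hPO := submatrix_smul_one_le hPlo Sum.inr_injective
  rw [regressionCoeff, regressionCoeff, mul_inv_sub_mul_inv_s19 _ _
    (iff_of_true (isUnit_of_smul_one_le hm hPO) (isUnit_of_smul_one_le hm hKO))]
  set KO := K.submatrix Sum.inr Sum.inr
  set PO := P.submatrix Sum.inr Sum.inr
  have hD_BO : ‖P.submatrix Sum.inl Sum.inr - K.submatrix Sum.inl Sum.inr‖ ≤ ‖P - K‖ :=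
    norm_submatrix_le (P - K) Sum.inl_injective Sum.inr_injective
  have hD_O : ‖KO - PO‖ ≤ ‖P - K‖ := by
    rw [← norm_neg, neg_sub]
    exact norm_submatrix_le (P - K) Sum.inr_injective Sum.inr_injective
  have hK_BO : ‖K.submatrix Sum.inl Sum.inr‖ ≤ M :=
    (norm_submatrix_le _ Sum.inl_injective Sum.inr_injective).trans
      (norm_le_of_le_smul_one hM ((smul_nonneg hm.le zero_le_one).trans hKlo) hKhi)
  have hKO_inv := norm_inv_le_of_smul_one_le hm hKO
  have hPO_inv := norm_inv_le_of_smul_one_le hm hPO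
  have hcorr : ‖PO⁻¹ * (KO - PO) * KO⁻¹‖ ≤ m⁻¹ * ‖P - K‖ * m⁻¹ :=
    calc _ ≤ ‖PO⁻¹‖ * ‖KO - PO‖ * ‖KO⁻¹‖ :=
          (l2_opNorm_mul _ _).trans (by gcongr; exact l2_opNorm_mul _ _)
      _ ≤ m⁻¹ * ‖P - K‖ * m⁻¹ := by gcongr
  calc _ ≤ ‖P - K‖ * m⁻¹ + M * (m⁻¹ * ‖P - K‖ * m⁻¹) := by
        refine (norm_add_le _ _).trans (add_le_add ?_ ?_)
        · exact (l2_opNorm_mul _ _).trans (by gcongr)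
        · exact (l2_opNorm_mul _ _).trans (mul_le_mul hK_BO hcorr (norm_nonneg _) hM)
    _ = (m + M) / m ^ 2 * ‖P - K‖ := by field_simp

lemma sq_regressionCoeff_sub_le {m M : ℝ} (hm : 0 < m) (hM : 0 ≤ M)
    {K P : Matrix (β ⊕ ι) (β ⊕ ι) ℝ} (hKlo : m • 1 ≤ K) (hKhi : K ≤ M • 1) (hPlo : m • 1 ≤ P)
    {a : β → ℝ} (ha : ∑ b, a b ^ 2 = 1) (x : ι → ℝ) :
    ((a ᵥ* regressionCoeff P) ⬝ᵥ x - (a ᵥ* regressionCoeff K) ⬝ᵥ x) ^ 2 ≤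
      ((m + M) / m ^ 2) ^ 2 * (‖P - K‖ ^ 2 * ∑ o, x o ^ 2) := by
  rw [← sub_dotProduct, ← vecMul_sub, ← dotProduct_mulVec]
  refine (sq_dotProduct_mulVec_le _ a x).trans ?_
  rw [ha, one_mul, ← mul_assoc, ← mul_pow]
  gcongr
  exact norm_regressionCoeff_sub_le hm hM hKlo hKhi hPlo

end Regression

section Integral

variable {Ω : Type*} [MeasurableSpace Ω] {μ : Measure Ω}

lemma integral_mul_le_sqrt_mul_sqrt {f g : Ω → ℝ} (hf0 : 0 ≤ᵐ[μ] f) (hg0 : 0 ≤ᵐ[μ] g)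
    (hf : MemLp f 2 μ) (hg : MemLp g 2 μ) :
    ∫ ω, f ω * g ω ∂μ ≤ √(∫ ω, f ω ^ 2 ∂μ) * √(∫ ω, g ω ^ 2 ∂μ) := by
  have h := integral_mul_le_Lp_mul_Lq_of_nonneg Real.HolderConjugate.two_two hf0 hg0
    (by simpa using hf) (by simpa using hg)
  simpa [Real.sqrt_eq_rpow] using h

lemma sqrt_integral_sq_le_of_sq_le {Y ε S : Ω → ℝ} {c r : ℝ} (hc : 0 ≤ c) (hr : 0 ≤ r)
    (hY : ∀ᵐ ω ∂μ, Y ω ^ 2 ≤ c ^ 2 * (ε ω ^ 2 * S ω))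
    (hε : MemLp ε 4 μ) (hε4 : ∫ ω, ε ω ^ 4 ∂μ ≤ r ^ 4) (hS0 : 0 ≤ᵐ[μ] S) (hS : MemLp S 2 μ) :
    √(∫ ω, Y ω ^ 2 ∂μ) ≤ c * (∫ ω, S ω ^ 2 ∂μ) ^ (1 / 4 : ℝ) * r := by
  have hε2 : MemLp (fun ω => ε ω ^ 2) 2 μ := by
    have h42 : (4 : ℝ≥0∞) / 2 = 2 := by
      rw [eq_comm, ENNReal.eq_div_iff two_ne_zero ENNReal.ofNat_ne_top]; norm_num
    simpa [h42] using hε.norm_rpow_div 2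
  set J := ∫ ω, S ω ^ 2 ∂μ
  have hJ : 0 ≤ J := integral_nonneg fun _ => sq_nonneg _
  have hεS : ∫ ω, ε ω ^ 2 * S ω ∂μ ≤ r ^ 2 * √J := by
    calc ∫ ω, ε ω ^ 2 * S ω ∂μ ≤ √(∫ ω, (ε ω ^ 2) ^ 2 ∂μ) * √J :=
          integral_mul_le_sqrt_mul_sqrt (ae_of_all _ fun _ => sq_nonneg _) hS0 hε2 hS
      _ ≤ r ^ 2 * √J := by
          gcongr
          rw [← Real.sqrt_sq (sq_nonneg r)]
          gcongr
          simpa only [← pow_mul] using hε4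
  have hYJ : ∫ ω, Y ω ^ 2 ∂μ ≤ c ^ 2 * (r ^ 2 * √J) := by
    by_cases hYi : Integrable (fun ω => Y ω ^ 2) μ
    · calc ∫ ω, Y ω ^ 2 ∂μ ≤ ∫ ω, c ^ 2 * (ε ω ^ 2 * S ω) ∂μ :=
            integral_mono_ae hYi ((hε2.integrable_mul hS).const_mul _) hY
        _ = c ^ 2 * ∫ ω, ε ω ^ 2 * S ω ∂μ := integral_const_mul _ _
        _ ≤ c ^ 2 * (r ^ 2 * √J) := by gcongr
    · rw [integral_undef hYi]
      positivity
  calc √(∫ ω, Y ω ^ 2 ∂μ) ≤ √(c ^ 2 * (r ^ 2 * √J)) := Real.sqrt_le_sqrt hYJ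
    _ = c * J ^ (1 / 4 : ℝ) * r := by
        rw [Real.sqrt_mul' _ (by positivity), Real.sqrt_mul' _ (by positivity), Real.sqrt_sq hc,
          Real.sqrt_sq hr, Real.sqrt_eq_rpow, Real.sqrt_eq_rpow, ← Real.rpow_mul hJ]
        norm_num
        ring

end Integral

theorem stmt19_general {B O : Type*} [Fintype B] [Fintype O]
    [DecidableEq B] [DecidableEq O]
    (m M : ℝ) (hm : 0 < m) (hmM : m ≤ M)
    (K : Matrix (B ⊕ O) (B ⊕ O) ℝ)
    (hKlo : (K - m • (1 : Matrix (B ⊕ O) (B ⊕ O) ℝ)).PosSemidef)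
    (hKhi : (M • (1 : Matrix (B ⊕ O) (B ⊕ O) ℝ) - K).PosSemidef)
    {Ω : Type*} [MeasurableSpace Ω] (μ : Measure Ω) [IsProbabilityMeasure μ]
    (X : Ω → (B ⊕ O) → ℝ) (hXmeas : Measurable X)
    (hXint : Integrable (fun ω => (∑ i : O, (X ω (Sum.inr i)) ^ 2) ^ 2) μ)
    (Khat : Ω → Matrix (B ⊕ O) (B ⊕ O) ℝ) (hKhatmeas : ∀ u v : B ⊕ O, Measurable fun ω => Khat ω u v)
    (hKhatlo : ∀ᵐ ω ∂μ, ((Khat ω) - m • (1 : Matrix (B ⊕ O) (B ⊕ O) ℝ)).PosSemidef)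
    (hKhathi : ∀ᵐ ω ∂μ, (M • (1 : Matrix (B ⊕ O) (B ⊕ O) ℝ) - Khat ω).PosSemidef)
    (r : ℝ) (hr : 0 ≤ r)
    (hKhatK : ∫ ω, (l2OpNorm (Khat ω - K)) ^ 4 ∂μ ≤ r ^ 4)
    (a : B → ℝ) (ha : ∑ b, (a b) ^ 2 = 1)
    (Zbar Zhat : Ω → ℝ)
    (hZbar : Zbar = fun ω => ∑ o : O,
      ((K.submatrix Sum.inl Sum.inr * (K.submatrix Sum.inr Sum.inr)⁻¹).vecMul a) o
        * X ω (Sum.inr o))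
    (hZhat : Zhat = fun ω => ∑ o : O,
      (((Khat ω).submatrix Sum.inl Sum.inr *
          ((Khat ω).submatrix Sum.inr Sum.inr)⁻¹).vecMul a) o
        * X ω (Sum.inr o)) :
    Real.sqrt (∫ ω, (Zhat ω - Zbar ω) ^ 2 ∂μ) ≤
      (m + M) / m ^ 2 *
        (∫ ω, (∑ i : O, (X ω (Sum.inr i)) ^ 2) ^ 2 ∂μ) ^ ((1 : ℝ) / 4) * r := by
  have hM : 0 ≤ M := hm.le.trans hmM
  have hK0 : 0 ≤ K := (smul_nonneg hm.le zero_le_one).trans hKlo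
  have hS : Measurable fun ω => ∑ i : O, X ω (Sum.inr i) ^ 2 :=
    Finset.measurable_sum _ fun i _ => ((measurable_pi_apply _).comp hXmeas).pow_const 2
  have hε : Measurable fun ω => ‖Khat ω - K‖ :=
    measurable_norm_of_measurable_apply fun i j => (hKhatmeas i j).sub measurable_const
  have hε_le : ∀ᵐ ω ∂μ, ‖‖Khat ω - K‖‖ ≤ M + M := by
    filter_upwards [hKhatlo, hKhathi] with ω hlo hhi
    rw [norm_norm]
    refine (norm_sub_le _ _).trans (add_le_add ?_ (norm_le_of_le_smul_one hM hK0 hKhi))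
    exact norm_le_of_le_smul_one hM ((smul_nonneg hm.le zero_le_one).trans hlo) hhi
  -- `hKhatK` fits as is: `l2OpNorm` unfolds to the norm of `Matrix.Norms.L2Operator`.
  refine sqrt_integral_sq_le_of_sq_le (div_nonneg (by linarith) (sq_nonneg m)) hr ?_
    (MemLp.of_bound hε.aestronglyMeasurable _ hε_le) hKhatK
    (ae_of_all _ fun ω => Finset.sum_nonneg fun i _ => sq_nonneg _)
    ((memLp_two_iff_integrable_sq hS.aestronglyMeasurable).mpr hXint)
  filter_upwards [hKhatlo] with ω hlo
  subst hZhat hZbar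
  exact sq_regressionCoeff_sub_le hm hM hKlo hKhi hlo ha _

theorem stmt19 {B O : Type*} [Fintype B] [Fintype O] [Nonempty B] [Nonempty O]
    [DecidableEq B] [DecidableEq O]
    (m M : ℝ) (hm : 0 < m) (hmM : m ≤ M)
    (K : Matrix (B ⊕ O) (B ⊕ O) ℝ) (hKsymm : K.IsSymm)
    (hKlo : (K - m • (1 : Matrix (B ⊕ O) (B ⊕ O) ℝ)).PosSemidef)
    (hKhi : (M • (1 : Matrix (B ⊕ O) (B ⊕ O) ℝ) - K).PosSemidef)
    {Ω : Type*} [MeasurableSpace Ω] (μ : Measure Ω) [IsProbabilityMeasure μ]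
    (X : Ω → (B ⊕ O) → ℝ) (hXmeas : Measurable X)
    (hXint : Integrable (fun ω => (∑ i : O, (X ω (Sum.inr i)) ^ 2) ^ 2) μ)
    (Khat : Ω → Matrix (B ⊕ O) (B ⊕ O) ℝ) (hKhatmeas : ∀ u v : B ⊕ O, Measurable fun ω => Khat ω u v)
    (hKhatsymm : ∀ᵐ ω ∂μ, (Khat ω).IsSymm)
    (hKhatlo : ∀ᵐ ω ∂μ, ((Khat ω) - m • (1 : Matrix (B ⊕ O) (B ⊕ O) ℝ)).PosSemidef)
    (hKhathi : ∀ᵐ ω ∂μ, (M • (1 : Matrix (B ⊕ O) (B ⊕ O) ℝ) - Khat ω).PosSemidef)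
    (r : ℝ) (hr : 0 ≤ r)
    (hKhatK : ∫ ω, (l2OpNorm (Khat ω - K)) ^ 4 ∂μ ≤ r ^ 4)
    (a : B → ℝ) (ha : ∑ b, (a b) ^ 2 = 1)
    (Zbar Zhat : Ω → ℝ)
    (hZbar : Zbar = fun ω => ∑ o : O,
      ((K.submatrix Sum.inl Sum.inr * (K.submatrix Sum.inr Sum.inr)⁻¹).vecMul a) o
        * X ω (Sum.inr o))
    (hZhat : Zhat = fun ω => ∑ o : O,
      (((Khat ω).submatrix Sum.inl Sum.inr *
          ((Khat ω).submatrix Sum.inr Sum.inr)⁻¹).vecMul a) o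
        * X ω (Sum.inr o)) :
    Real.sqrt (∫ ω, (Zhat ω - Zbar ω) ^ 2 ∂μ) ≤
      (m + M) / m ^ 2 *
        (∫ ω, (∑ i : O, (X ω (Sum.inr i)) ^ 2) ^ 2 ∂μ) ^ ((1 : ℝ) / 4) * r :=
  stmt19_general m M hm hmM K hKlo hKhi μ X hXmeas hXint Khat hKhatmeas hKhatlo hKhathi r hr hKhatK
    a ha Zbar Zhat hZbar hZhat
end
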